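/- Let (M, d) be a metric space and let γ₁, γ₂ be lines in M. Then γ₁ ∼ γ₂ if and only if there exist constants c₊, c₋ ∈ ℝ such that b_{γ₁⁺}(x) = b_{γ₂⁺}(x) + c₊ and b_{γ₁⁻}(x) = b_{γ₂⁻}(x) + c₋ for all x ∈ M (that is, γ₁ and γ₂ connect the same pair of points of the ideal boundary M(∞) defined by equivalence of Busemann functions up to additive constants); moreover, in that case necessarily c₊ + c₋ = 0. -/
import Mathlib


open Filter Topology

variable {M : Type*} [MetricSpace M]

/-- A ray in a metric space: a map `γ` defined (in effect) on `[0, ∞)` with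
`d(γ s, γ t) = |s - t|` for all `s, t ≥ 0`. -/
def IsRay (γ : ℝ → M) : Prop :=
  ∀ s t : ℝ, 0 ≤ s → 0 ≤ t → dist (γ s) (γ t) = |s - t|

/-- A line in a metric space: a map `γ : ℝ → M` with `d(γ s, γ t) = |s - t|`. -/
def IsLine (γ : ℝ → M) : Prop :=
  ∀ s t : ℝ, dist (γ s) (γ t) = |s - t|

/-- The Busemann function of a ray `γ`:
`b_γ(x) = lim_{t → ∞} (d(x, γ t) - t)`, which exists and equals the infimum
since `t ↦ d(x, γ t) - t` is nonincreasing on `[0, ∞)` and bounded below. -/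
noncomputable def busemann (γ : ℝ → M) (x : M) : ℝ :=
  ⨅ t : Set.Ici (0 : ℝ), (dist x (γ t) - (t : ℝ))

/-- For a line `γ`, the negative ray `γ⁻(t) = γ(-t)`.  (The positive ray `γ⁺`
is just `γ` itself, restricted to `[0, ∞)`.) -/
def negRay (γ : ℝ → M) : ℝ → M := fun t => γ (-t)

/-- The barrier function of a line `γ`: `B_γ = b_{γ⁺} + b_{γ⁻}`. -/
noncomputable def barrier (γ : ℝ → M) (x : M) : ℝ :=
  busemann γ x + busemann (negRay γ) x

/-- `γ' ≺ γ`: the barrier of `γ` vanishes at `γ' 0` and both Busemann functions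
`b_{γ⁺}`, `b_{γ⁻}` calibrate `γ'` (every forward translate of `γ'` is a coray to
`γ⁺` and every backward translate is a coray to `γ⁻`). -/
def Prec (γ' γ : ℝ → M) : Prop :=
  busemann γ (γ' 0) + busemann (negRay γ) (γ' 0) = 0 ∧
  ∀ t : ℝ, busemann γ (γ' t) = busemann γ (γ' 0) - t ∧
    busemann (negRay γ) (γ' t) = busemann (negRay γ) (γ' 0) + t

/-- A geodesic metric space: any two points are joined by a minimizing geodesic
segment. -/
def IsGeodesicSpace (M : Type*) [MetricSpace M] : Prop :=
  ∀ x y : M, ∃ σ : ℝ → M, σ 0 = x ∧ σ (dist x y) = y ∧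
    ∀ s t : ℝ, s ∈ Set.Icc 0 (dist x y) → t ∈ Set.Icc 0 (dist x y) →
      dist (σ s) (σ t) = |s - t|

/-- `γ'` is a coray to the ray `γ`: there are `tᵢ → ∞`, points `xᵢ → γ' 0` and
minimal geodesic segments `cᵢ` from `xᵢ` to `γ (tᵢ)` of length `Tᵢ = d(xᵢ, γ tᵢ) → ∞`
converging to `γ'` uniformly on compact subintervals of `[0, ∞)`. -/
def IsCoray (γ' γ : ℝ → M) : Prop :=
  ∃ (t : ℕ → ℝ) (x : ℕ → M) (c : ℕ → ℝ → M),
    (∀ i, 0 ≤ t i) ∧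
    Tendsto t atTop atTop ∧
    Tendsto x atTop (𝓝 (γ' 0)) ∧
    (∀ i, c i 0 = x i) ∧
    (∀ i, c i (dist (x i) (γ (t i))) = γ (t i)) ∧
    (∀ i, ∀ s s' : ℝ, s ∈ Set.Icc 0 (dist (x i) (γ (t i))) →
      s' ∈ Set.Icc 0 (dist (x i) (γ (t i))) → dist (c i s) (c i s') = |s - s'|) ∧
    Tendsto (fun i => dist (x i) (γ (t i))) atTop atTop ∧
    (∀ K > (0 : ℝ), ∀ ε > (0 : ℝ), ∃ N : ℕ, ∀ i ≥ N,
      ∀ s ∈ Set.Icc (0 : ℝ) K, dist (c i s) (γ' s) < ε)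

/-- The line `γ` has the uniqueness property: through each point of the zero set
of `B_γ` there is at most one line `γ''` with `γ'' ≺ γ`. -/
def HasUniqueCalibLine (γ : ℝ → M) : Prop :=
  ∀ x : M, barrier γ x = 0 →
    ∀ γ₁ γ₂ : ℝ → M, IsLine γ₁ → IsLine γ₂ → γ₁ 0 = x → γ₂ 0 = x →
      Prec γ₁ γ → Prec γ₂ γ → γ₁ = γ₂

lemma isRay_of_isLine {γ : ℝ → M} (h : IsLine γ) : IsRay γ := fun s t _ _ => h s t

lemma isLine_negRay {γ : ℝ → M} (h : IsLine γ) : IsLine (negRay γ) := by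
  intro s t
  simp only [negRay, h (-s) (-t)]
  rw [show -s - -t = -(s - t) by ring, abs_neg]

lemma busemann_bddBelow (γ : ℝ → M) (hγ : IsRay γ) (x : M) :
    BddBelow (Set.range fun t : Set.Ici (0:ℝ) => dist x (γ t) - (t : ℝ)) := by
  refine ⟨-dist x (γ 0), ?_⟩
  rintro _ ⟨⟨t, ht⟩, rfl⟩
  have h1 := hγ 0 t le_rfl ht
  rw [zero_sub, abs_neg, abs_of_nonneg ht] at h1
  have h2 := dist_triangle (γ 0) x (γ t)
  rw [dist_comm (γ 0) x, h1] at h2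
  simp only
  linarith

lemma busemann_le (γ : ℝ → M) (hγ : IsRay γ) (x : M) {t : ℝ} (ht : 0 ≤ t) :
    busemann γ x ≤ dist x (γ t) - t :=
  ciInf_le (busemann_bddBelow γ hγ x) ⟨t, ht⟩

lemma le_busemann (γ : ℝ → M) (x : M) {a : ℝ}
    (h : ∀ t : ℝ, 0 ≤ t → a ≤ dist x (γ t) - t) : a ≤ busemann γ x :=
  le_ciInf fun ⟨t, ht⟩ => h t ht

lemma busemann_le_add (γ : ℝ → M) (hγ : IsRay γ) (x y : M) :
    busemann γ x ≤ dist x y + busemann γ y := by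
  have : busemann γ x - dist x y ≤ busemann γ y := by
    apply le_busemann
    intro t ht
    have h1 := busemann_le γ hγ x ht
    have h2 := dist_triangle x y (γ t)
    linarith
  linarith

lemma busemann_line_self {γ : ℝ → M} (hγ : IsLine γ) (s : ℝ) :
    busemann γ (γ s) = -s := by
  apply le_antisymm
  · have h := busemann_le γ (isRay_of_isLine hγ) (γ s) (le_max_right s 0)
    rw [hγ s (max s 0)] at h
    rcases le_total s 0 with hs | hs
    · simpa [max_eq_right hs, abs_of_nonpos hs] using h
    · simpa [max_eq_left hs, abs_of_nonpos (by linarith : s - s ≤ 0)] using h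
  · apply le_busemann
    intro t ht
    rw [hγ s t]
    linarith [neg_le_abs (s - t)]

lemma busemann_negRay_self {γ : ℝ → M} (hγ : IsLine γ) (s : ℝ) :
    busemann (negRay γ) (γ s) = s := by
  have h := busemann_line_self (isLine_negRay hγ) (-s)
  simpa [negRay] using h

lemma barrier_nonneg' {γ : ℝ → M} (hγ : IsLine γ) (x : M) :
    0 ≤ busemann γ x + busemann (negRay γ) x := by
  have h : -busemann (negRay γ) x ≤ busemann γ x := by
    apply le_busemann
    intro t ht
    rw [neg_le]
    apply le_busemann
    intro u hu
    have htri := dist_triangle (γ t) x (γ (-u))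
    have heq := hγ t (-u)
    rw [heq, abs_of_nonneg (by linarith : (0:ℝ) ≤ t - -u), dist_comm (γ t) x] at htri
    simp only [negRay]
    linarith
  linarith

lemma busemann_le_busemann {γ γ' : ℝ → M} (hγ : IsRay γ) (x : M)
    (hcal : ∀ s : ℝ, 0 ≤ s → busemann γ (γ' s) = busemann γ (γ' 0) - s) :
    busemann γ x ≤ busemann γ' x + busemann γ (γ' 0) := by
  have : busemann γ x - busemann γ (γ' 0) ≤ busemann γ' x := by
    apply le_busemann
    intro s hs
    have h1 := busemann_le_add γ hγ x (γ' s)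
    rw [hcal s hs] at h1
    linarith
  linarith

/-- two lines are `∼`-equivalent iff their (forward and backward)
Busemann functions differ by constants, i.e. iff they connect the same pair of
points of the ideal boundary `M(∞)`; and then the two constants sum to zero. -/
theorem sim_iff_busemann_eq_up_to_const (γ₁ γ₂ : ℝ → M)
    (h₁ : IsLine γ₁) (h₂ : IsLine γ₂) :
    ((Prec γ₁ γ₂ ∧ Prec γ₂ γ₁) ↔
      ∃ cp cm : ℝ, (∀ x : M, busemann γ₁ x = busemann γ₂ x + cp) ∧
        (∀ x : M, busemann (negRay γ₁) x = busemann (negRay γ₂) x + cm)) ∧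
    (∀ cp cm : ℝ, (∀ x : M, busemann γ₁ x = busemann γ₂ x + cp) →
      (∀ x : M, busemann (negRay γ₁) x = busemann (negRay γ₂) x + cm) →
      cp + cm = 0) := by
  have e1 : busemann γ₁ (γ₁ 0) = 0 := by simpa using busemann_line_self h₁ 0
  have e2 : busemann γ₂ (γ₂ 0) = 0 := by simpa using busemann_line_self h₂ 0
  have e1n : busemann (negRay γ₁) (γ₁ 0) = 0 := busemann_negRay_self h₁ 0
  have e2n : busemann (negRay γ₂) (γ₂ 0) = 0 := busemann_negRay_self h₂ 0
  have hfin : ∀ cp cm : ℝ, (∀ x : M, busemann γ₁ x = busemann γ₂ x + cp) →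
      (∀ x : M, busemann (negRay γ₁) x = busemann (negRay γ₂) x + cm) →
      cp + cm = 0 := by
    intro cp cm hp hm
    have a1 := hp (γ₂ 0)
    have a2 := hm (γ₂ 0)
    have a3 := hp (γ₁ 0)
    have a4 := hm (γ₁ 0)
    have n1 := barrier_nonneg' h₁ (γ₂ 0)
    have n2 := barrier_nonneg' h₂ (γ₁ 0)
    linarith
  refine ⟨⟨?_, ?_⟩, hfin⟩
  · rintro ⟨⟨hz12, hc12⟩, ⟨hz21, hc21⟩⟩
    set a := busemann γ₂ (γ₁ 0) with ha
    have ham : busemann (negRay γ₂) (γ₁ 0) = -a := by linarith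
    set b := busemann γ₁ (γ₂ 0) with hb
    have hbm : busemann (negRay γ₁) (γ₂ 0) = -b := by linarith
    have hn10 : negRay γ₁ 0 = γ₁ 0 := by simp [negRay]
    have hn20 : negRay γ₂ 0 = γ₂ 0 := by simp [negRay]
    have k1 : ∀ x, busemann γ₂ x ≤ busemann γ₁ x + a :=
      fun x => busemann_le_busemann (isRay_of_isLine h₂) x (fun s _ => (hc12 s).1)
    have k2 : ∀ x, busemann γ₁ x ≤ busemann γ₂ x + b :=
      fun x => busemann_le_busemann (isRay_of_isLine h₁) x (fun s _ => (hc21 s).1)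
    have k3 : ∀ x, busemann (negRay γ₂) x ≤ busemann (negRay γ₁) x + (-a) := by
      intro x
      have hcal : ∀ s : ℝ, 0 ≤ s →
          busemann (negRay γ₂) ((negRay γ₁) s) =
            busemann (negRay γ₂) ((negRay γ₁) 0) - s := by
        intro s _
        have h := (hc12 (-s)).2
        simp only [negRay, neg_neg] at h ⊢
        rw [neg_zero]
        linarith
      have h := busemann_le_busemann (isRay_of_isLine (isLine_negRay h₂)) x hcal
      rw [hn10] at h
      linarith
    have k4 : ∀ x, busemann (negRay γ₁) x ≤ busemann (negRay γ₂) x + (-b) := by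
      intro x
      have hcal : ∀ s : ℝ, 0 ≤ s →
          busemann (negRay γ₁) ((negRay γ₂) s) =
            busemann (negRay γ₁) ((negRay γ₂) 0) - s := by
        intro s _
        have h := (hc21 (-s)).2
        simp only [negRay, neg_neg] at h ⊢
        rw [neg_zero]
        linarith
      have h := busemann_le_busemann (isRay_of_isLine (isLine_negRay h₁)) x hcal
      rw [hn20] at h
      linarith
    have eab : a + b = 0 := by
      have p1 := k2 (γ₁ 0)
      have p2 := k4 (γ₁ 0)
      linarith
    refine ⟨b, a, fun x => ?_, fun x => ?_⟩
    · have := k1 x; have := k2 x; linarith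
    · have := k3 x; have := k4 x; linarith
  · rintro ⟨cp, cm, hp, hm⟩
    have hsum : cp + cm = 0 := hfin cp cm hp hm
    have e2p : busemann γ₂ (γ₁ 0) = -cp := by have := hp (γ₁ 0); linarith
    have e2m : busemann (negRay γ₂) (γ₁ 0) = -cm := by have := hm (γ₁ 0); linarith
    have e1p : busemann γ₁ (γ₂ 0) = cp := by have := hp (γ₂ 0); linarith
    have e1m : busemann (negRay γ₁) (γ₂ 0) = cm := by have := hm (γ₂ 0); linarith
    constructor
    · refine ⟨by linarith, fun t => ⟨?_, ?_⟩⟩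
      · have h := hp (γ₁ t)
        have hs := busemann_line_self h₁ t
        linarith
      · have h := hm (γ₁ t)
        have hs := busemann_negRay_self h₁ t
        linarith
    · refine ⟨by linarith, fun t => ⟨?_, ?_⟩⟩
      · have h := hp (γ₂ t)
        have hs := busemann_line_self h₂ t
        linarith
      · have h := hm (γ₂ t)
        have hs := busemann_negRay_self h₂ t
        linarith
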